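/- arXiv:2510.05719 — 3 statements merged into one kernel-verified Lean document; each statement's English description precedes it below -/
import Mathlib

section
/- Let a_1 ≤ a_2 ≤ ... ≤ a_n be real numbers and γ > 0. Define c^0 = (∑_{i=1}^n a_i)/n + 2γ/n. Suppose k is such that a_1,...,a_k < c^0 and a_{k+1},...,a_n ≥ c^0, with 1 ≤ k ≤ n. Define c^1 = (∑_{i=1}^k a_i)/k + 2γ/k. Then c^0 ≥ c^1. -/
/-!
Write `S` for the sum of all the `a i` and `T` for the sum over the indices `i ≥ k`.
The definition of `c⁰` says `n c⁰ = S + 2γ`, and each of the `n - k` terms of `T` is at least `c⁰`,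
so `k c⁰ = n c⁰ - (n - k) c⁰ ≥ S + 2γ - T`, which is `k` times `c¹`.
-/

open Finset

theorem Finset.sum_add_le_card_nsmul_of_le_compl {ι M : Type*} [Fintype ι] [DecidableEq ι]
    [AddCommMonoid M] [PartialOrder M] [IsOrderedCancelAddMonoid M] (s : Finset ι) (a : ι → M) (b c : M)
    (hc : Fintype.card ι • c = ∑ i, a i + b) (hle : ∀ i ∉ s, c ≤ a i) :
    ∑ i ∈ s, a i + b ≤ #s • c := by
  have hcompl : #sᶜ • c ≤ ∑ i ∈ sᶜ, a i :=
    card_nsmul_le_sum _ _ _ fun i hi => hle i (mem_compl.mp hi)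
  have htotal : ∑ i ∈ s, a i + b + ∑ i ∈ sᶜ, a i = #s • c + #sᶜ • c := by
    rw [← add_nsmul, card_add_card_compl, hc, ← sum_add_sum_compl s a, add_right_comm]
  refine le_of_add_le_add_right (a := ∑ i ∈ sᶜ, a i) ?_
  rw [htotal]
  exact add_le_add_right hcompl _

theorem stmt_0_general (n : ℕ) (a : Fin n → ℝ) (γ : ℝ)
    (k : ℕ) (hk1 : 1 ≤ k) (hkn : k ≤ n)
    (c0 : ℝ) (hc0 : c0 = (∑ i, a i) / n + 2 * γ / n)
    (hge : ∀ i : Fin n, k ≤ (i : ℕ) → c0 ≤ a i) :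
    c0 ≥ (∑ i ∈ Finset.univ.filter (fun i : Fin n => (i : ℕ) < k), a i) / k + 2 * γ / k := by
  have hk : (0 : ℝ) < k := by exact_mod_cast hk1
  have hn : (n : ℝ) ≠ 0 := Nat.cast_ne_zero.mpr (by omega)
  have hcard : #{i : Fin n | (i : ℕ) < k} = k := by
    rw [Fin.card_filter_val_lt, min_eq_right hkn]
  have hnc0 : Fintype.card (Fin n) • c0 = ∑ i, a i + 2 * γ := by
    rw [Fintype.card_fin, nsmul_eq_mul, hc0]
    field_simp
  have hkc0 : ∑ i ∈ univ.filter (fun i : Fin n => (i : ℕ) < k), a i + 2 * γ ≤ k * c0 :=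
    calc _ ≤ #{i : Fin n | (i : ℕ) < k} • c0 :=
          sum_add_le_card_nsmul_of_le_compl _ a _ _ hnc0 fun i hi =>
            hge i (not_lt.mp fun h => hi (mem_filter.mpr ⟨mem_univ i, h⟩))
      _ = k * c0 := by rw [hcard, nsmul_eq_mul]
  rw [ge_iff_le, ← add_div, div_le_iff₀ hk]
  linarith

theorem stmt_0 (n : ℕ) (hn : 1 ≤ n) (a : Fin n → ℝ) (γ : ℝ) (hγ : 0 < γ)
    (hsorted : Monotone a) (k : ℕ) (hk1 : 1 ≤ k) (hkn : k ≤ n)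
    (c0 : ℝ) (hc0 : c0 = (∑ i, a i) / n + 2 * γ / n)
    (hlt : ∀ i : Fin n, (i : ℕ) < k → a i < c0)
    (hge : ∀ i : Fin n, k ≤ (i : ℕ) → c0 ≤ a i) :
    c0 ≥ (∑ i ∈ Finset.univ.filter (fun i : Fin n => (i : ℕ) < k), a i) / k + 2 * γ / k :=
  stmt_0_general n a γ k hk1 hkn c0 hc0 hge
end

section
/- Consider the optimization problem: minimize over s ∈ ℝ^n the function ∑_{i=1}^n a_i s_i + γ‖s‖_2^2 subject to s ≥ 0 (componentwise) and ∑_{i=1}^n s_i = 1, where γ > 0. Suppose S ⊆ {1,...,n} is a nonempty index set with k = |S| such that, setting c = (∑_{i∈S} a_i)/k + 2γ/k, we have a_i < c for all i ∈ S and a_j ≥ c for all j ∉ S. Then the vector s* defined by s*_i = (∑_{j∈S} a_j)/(2γk) − a_i/(2γ) + 1/k for i ∈ S and s*_i = 0 otherwise is the unique global minimizer. -/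
theorem stmt_2 (n : ℕ) (a : Fin n → ℝ) (γ : ℝ) (hγ : 0 < γ)
    (S : Finset (Fin n)) (hS : S.Nonempty) (k : ℕ) (hk : k = S.card)
    (c : ℝ) (hc : c = (∑ j ∈ S, a j) / k + 2 * γ / k)
    (hin : ∀ i ∈ S, a i < c) (hout : ∀ j ∉ S, c ≤ a j)
    (sstar : Fin n → ℝ)
    (hsstar : ∀ i, sstar i =
      if i ∈ S then (∑ j ∈ S, a j) / (2 * γ * k) - a i / (2 * γ) + 1 / k else 0) :
    ((∀ i, 0 ≤ sstar i) ∧ ∑ i, sstar i = 1) ∧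
    (∀ s : Fin n → ℝ, (∀ i, 0 ≤ s i) → ∑ i, s i = 1 →
      (∑ i, a i * sstar i) + γ * ∑ i, (sstar i) ^ 2 ≤
        (∑ i, a i * s i) + γ * ∑ i, (s i) ^ 2) ∧
    (∀ s : Fin n → ℝ, (∀ i, 0 ≤ s i) → ∑ i, s i = 1 →
      (∑ i, a i * s i) + γ * ∑ i, (s i) ^ 2 =
        (∑ i, a i * sstar i) + γ * ∑ i, (sstar i) ^ 2 → s = sstar) := by
  have hkpos : 0 < (k : ℝ) := by
    have : 0 < S.card := Finset.card_pos.mpr hS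
    exact_mod_cast hk ▸ this
  have hkne : (k : ℝ) ≠ 0 := ne_of_gt hkpos
  have hγne : (2 * γ) ≠ 0 := by positivity
  have hform : ∀ i ∈ S, sstar i = (c - a i) / (2 * γ) := by
    intro i hi
    rw [hsstar i, if_pos hi, hc]
    field_simp
    ring
  have hgrad : ∀ i ∈ S, a i + 2 * γ * sstar i = c := by
    intro i hi
    rw [hform i hi]
    field_simp
    ring
  have hnn : ∀ i, 0 ≤ sstar i := by
    intro i
    by_cases hi : i ∈ S
    · rw [hform i hi]
      have := hin i hi
      have h1 : 0 ≤ c - a i := by linarith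
      positivity
    · rw [hsstar i, if_neg hi]
  have hkc : c * k = (∑ j ∈ S, a j) + 2 * γ := by
    rw [hc]; field_simp
  have hsum : ∑ i, sstar i = 1 := by
    have h0 : ∑ i, sstar i = ∑ i ∈ S, sstar i := by
      rw [← Finset.sum_subset (Finset.subset_univ S)]
      intro x _ hx
      rw [hsstar x, if_neg hx]
    rw [h0, Finset.sum_congr rfl hform, ← Finset.sum_div, Finset.sum_sub_distrib,
      Finset.sum_const, ← hk, nsmul_eq_mul]
    field_simp
    linarith [hkc]
  -- key identity
  have hiden : ∀ s : Fin n → ℝ, ∑ i, s i = 1 →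
      (∑ i, a i * s i) + γ * ∑ i, (s i) ^ 2
      = ((∑ i, a i * sstar i) + γ * ∑ i, (sstar i) ^ 2)
        + (∑ i, (a i + 2 * γ * sstar i - c) * (s i - sstar i))
        + γ * ∑ i, (s i - sstar i) ^ 2 := by
    intro s hs1
    have e1 : ∀ i : Fin n,
        a i * s i + γ * (s i) ^ 2
          - (a i * sstar i + γ * (sstar i) ^ 2)
          - (a i + 2 * γ * sstar i - c) * (s i - sstar i)
          - γ * (s i - sstar i) ^ 2
        = c * s i - c * sstar i := by
      intro i; ring
    have h2 := Finset.sum_congr rfl (fun i (_ : i ∈ Finset.univ) => e1 i)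
    simp only [Finset.sum_sub_distrib, Finset.sum_add_distrib, ← Finset.mul_sum] at h2
    rw [hs1, hsum] at h2
    linarith
  have hA : ∀ s : Fin n → ℝ, (∀ i, 0 ≤ s i) →
      0 ≤ ∑ i, (a i + 2 * γ * sstar i - c) * (s i - sstar i) := by
    intro s hs
    apply Finset.sum_nonneg
    intro i _
    by_cases hi : i ∈ S
    · rw [hgrad i hi]; simp
    · rw [hsstar i, if_neg hi]
      have h1 := hout i hi
      have h2 := hs i
      nlinarith
  have hB : ∀ s : Fin n → ℝ, 0 ≤ ∑ i, (s i - sstar i) ^ 2 := by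
    intro s
    exact Finset.sum_nonneg fun i _ => sq_nonneg _
  refine ⟨⟨hnn, hsum⟩, ?_, ?_⟩
  · intro s hs hs1
    have := hiden s hs1
    have hA' := hA s hs
    have hB' := hB s
    nlinarith
  · intro s hs hs1 heq
    have hid := hiden s hs1
    have hA' := hA s hs
    have hB' := hB s
    have hBz : ∑ i, (s i - sstar i) ^ 2 = 0 := by nlinarith
    have := (Finset.sum_eq_zero_iff_of_nonneg
      (fun i (_ : i ∈ Finset.univ) => sq_nonneg (s i - sstar i))).mp hBz
    funext i
    have h := this i (Finset.mem_univ i)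
    have := sq_eq_zero_iff.mp h
    linarith
end

section
/- Let A ∈ ℝ^{n×n} with singular value decomposition A = U diag(σ_1,...,σ_n) V^T and let τ > 0. The singular value thresholding operator Θ_τ(A) = U diag(max(σ_1 − τ, 0),...,max(σ_n − τ, 0)) V^T is the unique minimizer of B ↦ τ‖B‖_* + (1/2)‖A − B‖_F^2 over B ∈ ℝ^{n×n}. -/
open Matrix

/-!
The first-order condition `A - Θ ∈ τ ∂‖Θ‖_*` holds with an explicit subgradient: for
`gᵢ = min(σᵢ, τ) / τ ∈ [0, 1]` the matrix `G = U diag(g) Vᵀ` satisfies `A - Θ = τ G`, it is a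
contraction, and `⟨G, Θ⟩ = ‖Θ‖_*` because `gᵢ = 1` wherever `σᵢ > τ`. A contraction satisfies
`⟨G, B⟩ ≤ ‖B‖_*` (compute the trace in an orthonormal eigenbasis of `BᵀB` and apply
Cauchy–Schwarz), so expanding the square gives `f B ≥ f Θ + ‖B - Θ‖_F² / 2` for the objective `f`,
which is minimality and uniqueness at once.
-/

/-- The nuclear norm of a real square matrix: the sum of its singular values,
i.e. the square roots of the eigenvalues of `Bᴴ * B`. -/
noncomputable def nuclearNorm {n : ℕ} (B : Matrix (Fin n) (Fin n) ℝ) : ℝ :=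
  ∑ i, Real.sqrt ((Matrix.isHermitian_conjTranspose_mul_self B).eigenvalues i)

section Frobenius

variable {m n : Type*} [Fintype m] [Fintype n]

lemma trace_transpose_mul_self_nonneg (X : Matrix m n ℝ) : 0 ≤ trace (Xᵀ * X) := by
  simpa using (posSemidef_conjTranspose_mul_self X).trace_nonneg

lemma trace_transpose_mul_self_eq_zero_iff {X : Matrix m n ℝ} :
    trace (Xᵀ * X) = 0 ↔ X = 0 := by
  simpa using trace_conjTranspose_mul_self_eq_zero_iff (A := X)

lemma trace_sub_transpose_mul_sub (X Y : Matrix m n ℝ) :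
    trace ((X - Y)ᵀ * (X - Y)) = trace (Xᵀ * X) - 2 * trace (Xᵀ * Y) + trace (Yᵀ * Y) := by
  rw [transpose_sub, Matrix.sub_mul, Matrix.mul_sub, Matrix.mul_sub]
  simp only [trace_sub]
  rw [← trace_transpose (Yᵀ * X), transpose_mul, transpose_transpose]
  ring

lemma transpose_mul_mul_transpose_of_orthogonal [DecidableEq m] {P : Matrix m m ℝ}
    (hP : Pᵀ * P = 1) (X Y : Matrix m n ℝ) (Q : Matrix n n ℝ) :
    (P * X * Qᵀ)ᵀ * (P * Y * Qᵀ) = Q * (Xᵀ * Y) * Qᵀ := by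
  simp only [transpose_mul, transpose_transpose, Matrix.mul_assoc]
  rw [← Matrix.mul_assoc Pᵀ, hP, Matrix.one_mul]

lemma trace_transpose_mul_of_orthogonal [DecidableEq m] [DecidableEq n] {P : Matrix m m ℝ}
    {Q : Matrix n n ℝ} (hP : Pᵀ * P = 1) (hQ : Qᵀ * Q = 1) (X Y : Matrix m n ℝ) :
    trace ((P * X * Qᵀ)ᵀ * (P * Y * Qᵀ)) = trace (Xᵀ * Y) := by
  rw [transpose_mul_mul_transpose_of_orthogonal hP, trace_mul_cycle, hQ, Matrix.one_mul]

end Frobenius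

section Contraction

variable {l m n : Type*} [Fintype m] [Fintype n]

/-- Operator norm at most `1` with respect to the Euclidean norms. -/
def IsContraction (G : Matrix m n ℝ) : Prop :=
  ∀ x, (G *ᵥ x) ⬝ᵥ (G *ᵥ x) ≤ x ⬝ᵥ x

lemma dotProduct_le_sqrt_mul_sqrt (x y : m → ℝ) : x ⬝ᵥ y ≤ √(x ⬝ᵥ x) * √(y ⬝ᵥ y) := by
  simpa only [dotProduct, sq] using Real.sum_mul_le_sqrt_mul_sqrt Finset.univ x y

lemma IsContraction.mul [Fintype l] {G : Matrix l m ℝ} {H : Matrix m n ℝ}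
    (hG : IsContraction G) (hH : IsContraction H) : IsContraction (G * H) := fun x => by
  rw [← mulVec_mulVec]
  exact (hG _).trans (hH x)

lemma isContraction_of_transpose_mul_self_eq_one [DecidableEq n] {M : Matrix m n ℝ}
    (hM : Mᵀ * M = 1) : IsContraction M := fun x => by
  rw [dotProduct_mulVec, vecMul_mulVec, hM, vecMul_one]

lemma isContraction_diagonal [DecidableEq n] {g : n → ℝ} (hg : ∀ i, |g i| ≤ 1) :
    IsContraction (diagonal g) := fun x => by
  simp only [dotProduct, mulVec_diagonal]
  refine Finset.sum_le_sum fun i _ => ?_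
  have hgg : g i * g i ≤ 1 := by
    rw [← abs_mul_abs_self]
    exact mul_le_one₀ (hg i) (abs_nonneg _) (hg i)
  nlinarith [mul_self_nonneg (x i)]

end Contraction

section NuclearNorm

open scoped MatrixOrder

variable {m : Type*} [Fintype m] [DecidableEq m]

lemma trace_eq_sum_dotProduct_mulVec (M : Matrix m m ℝ)
    (b : OrthonormalBasis m ℝ (EuclideanSpace ℝ m)) :
    M.trace = ∑ i, ⇑(b i) ⬝ᵥ (M *ᵥ ⇑(b i)) := by
  have htrace : LinearMap.trace ℝ _ (toLpLin 2 2 M) = M.trace := by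
    rw [toLpLin_eq_toLin, LinearMap.trace_eq_matrix_trace ℝ (PiLp.basisFun 2 ℝ m),
      LinearMap.toMatrix_toLin]
  rw [← htrace, LinearMap.trace_eq_sum_inner _ b]
  simp [EuclideanSpace.inner_eq_star_dotProduct, toLpLin_apply, dotProduct_comm]

lemma trace_cfcSqrt {M : Matrix m m ℝ} (hM : M.PosSemidef) :
    (CFC.sqrt M).trace = ∑ i, √(hM.1.eigenvalues i) := by
  rw [CFC.sqrt_eq_cfc, cfc_nnreal_eq_real _ M hM.nonneg, hM.1.cfc_eq, IsHermitian.cfc,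
    Unitary.conjStarAlgAut_apply, trace_mul_cycle,
    mem_unitaryGroup_iff'.mp hM.1.eigenvectorUnitary.2, Matrix.one_mul]
  simp [trace_diagonal, fun i => max_eq_left (hM.eigenvalues_nonneg i)]

variable {n : ℕ}

lemma nuclearNorm_eq_trace_sqrt (B : Matrix (Fin n) (Fin n) ℝ) :
    nuclearNorm B = (CFC.sqrt (Bᵀ * B)).trace := by
  rw [nuclearNorm, ← trace_cfcSqrt (posSemidef_conjTranspose_mul_self B),
    conjTranspose_eq_transpose_of_trivial]

lemma nuclearNorm_mul_mul_transpose {P Q S : Matrix (Fin n) (Fin n) ℝ} (hP : Pᵀ * P = 1)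
    (hQ : Qᵀ * Q = 1) (hS : S.PosSemidef) : nuclearNorm (P * S * Qᵀ) = S.trace := by
  have hSt : Sᵀ = S := (conjTranspose_eq_transpose_of_trivial S).symm.trans hS.1
  have hroot : CFC.sqrt ((P * S * Qᵀ)ᵀ * (P * S * Qᵀ)) = Q * S * Qᵀ := by
    refine CFC.sqrt_unique ?_ ?_
    · calc Q * S * Qᵀ * (Q * S * Qᵀ) = (Q * S * Qᵀ)ᵀ * (Q * S * Qᵀ) := by
            rw [transpose_mul, transpose_mul, transpose_transpose, hSt, Matrix.mul_assoc Q]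
        _ = (P * S * Qᵀ)ᵀ * (P * S * Qᵀ) := by
            rw [transpose_mul_mul_transpose_of_orthogonal hQ,
              transpose_mul_mul_transpose_of_orthogonal hP]
    · simpa using (hS.mul_mul_conjTranspose_same Q).nonneg
  rw [nuclearNorm_eq_trace_sqrt, hroot, trace_mul_cycle, hQ, Matrix.one_mul]

lemma IsContraction.trace_transpose_mul_le_nuclearNorm {G : Matrix (Fin n) (Fin n) ℝ}
    (hG : IsContraction G) (B : Matrix (Fin n) (Fin n) ℝ) :
    trace (Gᵀ * B) ≤ nuclearNorm B := by
  set hB := isHermitian_conjTranspose_mul_self B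
  rw [trace_eq_sum_dotProduct_mulVec _ hB.eigenvectorBasis, nuclearNorm]
  refine Finset.sum_le_sum fun i _ => ?_
  set w := ⇑(hB.eigenvectorBasis i)
  have hw : w ⬝ᵥ w = 1 := by
    have := real_inner_self_eq_norm_sq (hB.eigenvectorBasis i)
    rwa [hB.eigenvectorBasis.orthonormal.1 i, one_pow, EuclideanSpace.inner_eq_star_dotProduct,
      star_trivial] at this
  have hBw : (B *ᵥ w) ⬝ᵥ (B *ᵥ w) = hB.eigenvalues i := by
    rw [dotProduct_mulVec, vecMul_mulVec, ← dotProduct_mulVec,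
      ← conjTranspose_eq_transpose_of_trivial, hB.mulVec_eigenvectorBasis, dotProduct_smul, hw,
      smul_eq_mul, mul_one]
  calc w ⬝ᵥ ((Gᵀ * B) *ᵥ w) = (G *ᵥ w) ⬝ᵥ (B *ᵥ w) := by
        rw [← mulVec_mulVec, dotProduct_mulVec, vecMul_transpose]
    _ ≤ √((G *ᵥ w) ⬝ᵥ (G *ᵥ w)) * √((B *ᵥ w) ⬝ᵥ (B *ᵥ w)) := dotProduct_le_sqrt_mul_sqrt _ _
    _ ≤ √(hB.eigenvalues i) := by
        rw [hBw]
        refine mul_le_of_le_one_left (Real.sqrt_nonneg _) ?_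
        exact Real.sqrt_le_one.mpr ((hG w).trans_eq hw)

lemma nuclearNorm_add_trace_le_of_svd {U V : Matrix (Fin n) (Fin n) ℝ} (hU : Uᵀ * U = 1)
    (hV : Vᵀ * V = 1) (hV' : V * Vᵀ = 1) {g θ : Fin n → ℝ} (hθ : ∀ i, 0 ≤ θ i)
    (hg : ∀ i, |g i| ≤ 1) (hgθ : ∀ i, g i * θ i = θ i) (B : Matrix (Fin n) (Fin n) ℝ) :
    nuclearNorm (U * diagonal θ * Vᵀ) +
        trace ((U * diagonal g * Vᵀ)ᵀ * (B - U * diagonal θ * Vᵀ)) ≤ nuclearNorm B := by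
  have hG : IsContraction (U * diagonal g * Vᵀ) :=
    ((isContraction_of_transpose_mul_self_eq_one hU).mul (isContraction_diagonal hg)).mul
      (isContraction_of_transpose_mul_self_eq_one (by rwa [transpose_transpose]))
  have hGθ : trace ((U * diagonal g * Vᵀ)ᵀ * (U * diagonal θ * Vᵀ)) = ∑ i, θ i := by
    rw [trace_transpose_mul_of_orthogonal hU hV, diagonal_transpose, diagonal_mul_diagonal]
    simp only [trace_diagonal, hgθ]
  rw [nuclearNorm_mul_mul_transpose hU hV (posSemidef_diagonal_iff.mpr hθ), trace_diagonal,
    Matrix.mul_sub, trace_sub, hGθ]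
  linarith [hG.trace_transpose_mul_le_nuclearNorm B]

end NuclearNorm

section Prox

variable {m n : Type*} [Fintype m] [Fintype n]

noncomputable def proxObjective (τ : ℝ) (N : Matrix m n ℝ → ℝ) (A B : Matrix m n ℝ) : ℝ :=
  τ * N B + 1 / 2 * trace ((A - B)ᵀ * (A - B))

variable {τ : ℝ} {N : Matrix m n ℝ → ℝ} {A Θ G : Matrix m n ℝ}

lemma proxObjective_add_le_of_subgradient (hτ : 0 ≤ τ) (hAΘ : A - Θ = τ • G)
    (hG : ∀ B, N Θ + trace (Gᵀ * (B - Θ)) ≤ N B) (B : Matrix m n ℝ) :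
    proxObjective τ N A Θ + 1 / 2 * trace ((B - Θ)ᵀ * (B - Θ)) ≤ proxObjective τ N A B := by
  have hcross : trace ((A - Θ)ᵀ * (B - Θ)) = τ * trace (Gᵀ * (B - Θ)) := by
    rw [hAΘ, transpose_smul, Matrix.smul_mul, trace_smul, smul_eq_mul]
  unfold proxObjective
  rw [show A - B = (A - Θ) - (B - Θ) by abel, trace_sub_transpose_mul_sub (A - Θ), hcross]
  linarith [mul_le_mul_of_nonneg_left (hG B) hτ]

lemma proxObjective_unique_min_of_subgradient (hτ : 0 ≤ τ) (hAΘ : A - Θ = τ • G)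
    (hG : ∀ B, N Θ + trace (Gᵀ * (B - Θ)) ≤ N B) :
    (∀ B, proxObjective τ N A Θ ≤ proxObjective τ N A B) ∧
      (∀ B, proxObjective τ N A B = proxObjective τ N A Θ → B = Θ) := by
  have key := proxObjective_add_le_of_subgradient hτ hAΘ hG
  refine ⟨fun B => ?_, fun B hB => ?_⟩
  · linarith [key B, trace_transpose_mul_self_nonneg (B - Θ)]
  · have hdist : trace ((B - Θ)ᵀ * (B - Θ)) = 0 := by
      linarith [key B, trace_transpose_mul_self_nonneg (B - Θ)]
    exact sub_eq_zero.mp (trace_transpose_mul_self_eq_zero_iff.mp hdist)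

end Prox

theorem stmt_19_general (n : ℕ) (A : Matrix (Fin n) (Fin n) ℝ)
    (U V : Matrix (Fin n) (Fin n) ℝ) (σ : Fin n → ℝ) (hσ : ∀ i, 0 ≤ σ i)
    (hU : Uᵀ * U = 1) (hV : Vᵀ * V = 1) (hV' : V * Vᵀ = 1)
    (hSVD : A = U * Matrix.diagonal σ * Vᵀ)
    (τ : ℝ) (hτ : 0 < τ)
    (Θ : Matrix (Fin n) (Fin n) ℝ)
    (hΘ : Θ = U * Matrix.diagonal (fun i => max (σ i - τ) 0) * Vᵀ)
    (h : Matrix (Fin n) (Fin n) ℝ → ℝ)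
    (hh : ∀ B, h B = τ * nuclearNorm B + 1 / 2 * Matrix.trace ((A - B)ᵀ * (A - B))) :
    (∀ B, h Θ ≤ h B) ∧ (∀ B, h B = h Θ → B = Θ) := by
  set θ : Fin n → ℝ := fun i => max (σ i - τ) 0
  set g : Fin n → ℝ := fun i => min (σ i) τ / τ
  have hσθ : (fun i => σ i - θ i) = τ • g := funext fun i => by
    simp only [Pi.smul_apply, smul_eq_mul, θ, g, mul_div_cancel₀ _ hτ.ne']
    rcases le_total (σ i) τ with hστ | hστ
    · rw [max_eq_right (by linarith), min_eq_left hστ, sub_zero]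
    · rw [max_eq_left (by linarith), min_eq_right hστ, sub_sub_cancel]
  have hgθ : ∀ i, g i * θ i = θ i := fun i => by
    rcases le_total (σ i) τ with hστ | hστ
    · simp only [θ, max_eq_right (by linarith : σ i - τ ≤ 0), mul_zero]
    · simp only [g, min_eq_right hστ, div_self hτ.ne', one_mul]
  have hg : ∀ i, |g i| ≤ 1 := fun i =>
    abs_le.mpr ⟨by have := div_nonneg (le_min (hσ i) hτ.le) hτ.le; linarith,
      (div_le_one hτ).mpr (min_le_right _ _)⟩
  subst hSVD hΘ
  have hAΘ : U * diagonal σ * Vᵀ - U * diagonal θ * Vᵀ = τ • (U * diagonal g * Vᵀ) := by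
    rw [← Matrix.sub_mul, ← Matrix.mul_sub, diagonal_sub, hσθ, diagonal_smul,
      Matrix.mul_smul, Matrix.smul_mul]
  obtain rfl : h = proxObjective τ nuclearNorm _ := funext hh
  exact proxObjective_unique_min_of_subgradient hτ.le hAΘ
    (nuclearNorm_add_trace_le_of_svd hU hV hV' (fun i => le_max_right _ _) hg hgθ)

theorem stmt_19 (n : ℕ) (A : Matrix (Fin n) (Fin n) ℝ)
    (U V : Matrix (Fin n) (Fin n) ℝ) (σ : Fin n → ℝ) (hσ : ∀ i, 0 ≤ σ i)
    (hU : Uᵀ * U = 1) (hU' : U * Uᵀ = 1) (hV : Vᵀ * V = 1) (hV' : V * Vᵀ = 1)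
    (hSVD : A = U * Matrix.diagonal σ * Vᵀ)
    (τ : ℝ) (hτ : 0 < τ)
    (Θ : Matrix (Fin n) (Fin n) ℝ)
    (hΘ : Θ = U * Matrix.diagonal (fun i => max (σ i - τ) 0) * Vᵀ)
    (h : Matrix (Fin n) (Fin n) ℝ → ℝ)
    (hh : ∀ B, h B = τ * nuclearNorm B + 1 / 2 * Matrix.trace ((A - B)ᵀ * (A - B))) :
    (∀ B, h Θ ≤ h B) ∧ (∀ B, h B = h Θ → B = Θ) :=
  stmt_19_general n A U V σ hσ hU hV hV' hSVD τ hτ Θ hΘ h hh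
end
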